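/- In a co-tree X, if two nonminimal elements x and y are incomparable, then F₀ order embeds into X. -/

import Mathlib

/-!
Choose `x' < x` and `y' < y` and send `a, b, c, d, e` to `⊤, x, y, x', y'`. Since principal
upsets are chains, two elements with a common lower bound are comparable; so everything below `x`
is incomparable with everything below `y`, and these are all the non-relations `F₀` requires.
-/

/-- The co-tree `F₀`: a top element `a`, two incomparable points `b`, `c` below `a`,
and minimal points `d < b` and `e < c`, with `d`, `e` incomparable to everything else. -/
inductive F0 where
  | a | b | c | d | e
deriving DecidableEq

instance : Fintype F0 :=
  ⟨{.a, .b, .c, .d, .e}, fun x => by cases x <;> simp⟩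

def F0.leb : F0 → F0 → Bool
  | _, .a => true
  | .d, .b => true
  | .e, .c => true
  | x, y => decide (x = y)

instance : PartialOrder F0 where
  le x y := F0.leb x y = true
  le_refl u := by
    show F0.leb u u = true
    cases u <;> decide
  le_trans u v w := by
    show F0.leb u v = true → F0.leb v w = true → F0.leb u w = true
    cases u <;> cases v <;> cases w <;> decide
  le_antisymm u v := by
    show F0.leb u v = true → F0.leb v u = true → u = v
    cases u <;> cases v <;> decide

theorem F0.le_iff {u v : F0} :
    u ≤ v ↔ u = v ∨ v = .a ∨ (u = .d ∧ v = .b) ∨ (u = .e ∧ v = .c) := by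
  change F0.leb u v = true ↔ _
  cases u <;> cases v <;> decide

section CoTree

variable {X : Type*}

section Preorder

variable [Preorder X]

theorem IncompRel.of_le_left (hchain : ∀ z : X, IsChain (· ≤ ·) (Set.Ici z)) {b c d : X}
    (hbc : IncompRel (· ≤ ·) b c) (hdb : d ≤ b) : IncompRel (· ≤ ·) d c := by
  refine ⟨fun hdc => ?_, fun hcd => hbc.not_ge (hcd.trans hdb)⟩
  rcases eq_or_ne b c with rfl | hne
  · exact hbc.not_le le_rfl
  · exact (hchain d hdb hdc hne).elim hbc.not_le hbc.not_ge

theorem IncompRel.of_le_of_le (hchain : ∀ z : X, IsChain (· ≤ ·) (Set.Ici z)) {b c d e : X}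
    (hbc : IncompRel (· ≤ ·) b c) (hdb : d ≤ b) (hec : e ≤ c) : IncompRel (· ≤ ·) d e :=
  ((hbc.of_le_left hchain hdb).symm.of_le_left hchain hec).symm

theorem IncompRel.ne_top [OrderTop X] {b c : X} (hbc : IncompRel (· ≤ ·) b c) : b ≠ ⊤ :=
  fun hb => hbc.not_ge (hb ▸ le_top)

end Preorder

variable [PartialOrder X]

def F0.map (t b c d e : X) : F0 → X
  | .a => t | .b => b | .c => c | .d => d | .e => e

variable [OrderTop X]

theorem F0.map_le_map_iff (hchain : ∀ z : X, IsChain (· ≤ ·) (Set.Ici z)) {b c d e : X}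
    (hbc : IncompRel (· ≤ ·) b c) (hdb : d < b) (hec : e < c) (u v : F0) :
    F0.map ⊤ b c d e u ≤ F0.map ⊤ b c d e v ↔ u ≤ v := by
  have hbe := hbc.of_le_of_le hchain le_rfl hec.le
  have hdc := hbc.of_le_of_le hchain hdb.le le_rfl
  have hde := hbc.of_le_of_le hchain hdb.le hec.le
  rw [F0.le_iff]
  cases u <;> cases v <;>
    simp [F0.map, hdb.le, hec.le, hdb.not_ge, hec.not_ge, hbc.not_le, hbc.not_ge, hbe.not_le,
      hbe.not_ge, hdc.not_le, hdc.not_ge, hde.not_le, hde.not_ge, hbc.ne_top, hbc.symm.ne_top,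
      hdb.ne_top, hec.ne_top]

def F0.orderEmbedding (hchain : ∀ z : X, IsChain (· ≤ ·) (Set.Ici z)) {b c d e : X}
    (hbc : IncompRel (· ≤ ·) b c) (hdb : d < b) (hec : e < c) : F0 ↪o X :=
  OrderEmbedding.ofMapLEIff (F0.map ⊤ b c d e) (F0.map_le_map_iff hchain hbc hdb hec)

end CoTree

/-- If two nonminimal elements of a co-tree are incomparable, then `F₀` order embeds
into the co-tree. -/
theorem F0_orderEmbedding_of_incomparable_nonminimal {X : Type*} [PartialOrder X]
    [OrderTop X] (hchain : ∀ z : X, IsChain (· ≤ ·) (Set.Ici z))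
    (x y : X) (hx : ¬ IsMin x) (hy : ¬ IsMin y) (hxy : ¬ x ≤ y) (hyx : ¬ y ≤ x) :
    Nonempty (F0 ↪o X) := by
  obtain ⟨x', hx'⟩ := not_isMin_iff.mp hx
  obtain ⟨y', hy'⟩ := not_isMin_iff.mp hy
  exact ⟨F0.orderEmbedding hchain ⟨hxy, hyx⟩ hx' hy'⟩
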